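/- arXiv:2206.03347 — 3 statements merged into one kernel-verified Lean document; each statement's English description precedes it below -/
import Mathlib

section
/- Let μ⁻, μ⁺ be probability measures on ℝ^d with compact supports X⁻, X⁺ and let c : X⁻ × X⁺ → ℝ be continuous. Then the function ε ↦ v_ε is continuous, non-decreasing and concave on [0,+∞). -/
/-!
For a fixed coupling `γ`, `ε ↦ ∫ c dγ + ε Ent(γ | μ⁻ ⊗ μ⁺)` is affine with nonnegative slope, so
`v` is an infimum of nondecreasing affine functions: it is nondecreasing and concave on `[0, ∞)`,
hence continuous on `(0, ∞)`. Couplings of infinite entropy only matter at `ε = 0`, and there they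
can be discarded: on each cell of a fine finite partition of `X⁻ × X⁺` into products, replace `γ`
by the product of its conditioned marginals, with the same mass. This keeps the marginals, has
bounded density with respect to `μ⁻ ⊗ μ⁺` (so finite entropy), and moves `∫ c dγ` by at most the
oscillation of `c` on the cells, which is small by uniform continuity. Hence on all of `[0, ∞)`,
`v` is the infimum over finite-entropy couplings, and an infimum of continuous functions that is
nondecreasing is also continuous at `0`.
-/

open MeasureTheory Real Set Filter Classical
open scoped ENNReal NNReal Topology

noncomputable section

/-- Relative entropy (Kullback–Leibler divergence) `Ent(γ | q)`, with values in `EReal`: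
it equals `∫ ρ log ρ dq` if `γ = ρ·q` (with `ρ log ρ` integrable) and `+∞` otherwise. -/
def Ent {α : Type*} [MeasurableSpace α] (γ q : Measure α) : EReal :=
  if γ ≪ q ∧ Integrable (fun x => ((γ.rnDeriv q) x).toReal * Real.log ((γ.rnDeriv q) x).toReal) q
  then ((∫ x, ((γ.rnDeriv q) x).toReal * Real.log ((γ.rnDeriv q) x).toReal ∂q : ℝ) : EReal)
  else ⊤

/-- Entropic optimal transport cost
`v_ε = inf { ∫ c dγ + ε Ent(γ | μ⁻ ⊗ μ⁺) : γ coupling of μ⁻ and μ⁺ }`. -/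
def entCost {α β : Type*} [MeasurableSpace α] [MeasurableSpace β]
    (μm : Measure α) (μp : Measure β) (c : α × β → ℝ) (ε : ℝ) : EReal :=
  sInf {v : EReal | ∃ γ : Measure (α × β), IsProbabilityMeasure γ ∧ γ.fst = μm ∧ γ.snd = μp ∧
    v = ((∫ p, c p ∂γ : ℝ) : EReal) + (ε : EReal) * Ent γ (μm.prod μp)}

/-- Support of a measure: the set of points all of whose open neighbourhoods have
positive measure. -/
def msupport {α : Type*} [TopologicalSpace α] [MeasurableSpace α] (μ : Measure α) : Set α :=
  {x | ∀ U : Set α, IsOpen U → x ∈ U → μ U ≠ 0}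

section AffineInfimum

variable {ι : Type*} {a e : ι → ℝ} {f : ℝ → ℝ}

theorem monotoneOn_of_isGLB_affine (he : ∀ i, 0 ≤ e i)
    (hf : ∀ ε ∈ Ici (0 : ℝ), IsGLB (range fun i => a i + ε * e i) (f ε)) :
    MonotoneOn f (Ici 0) := by
  intro x hx y hy hxy
  refine (hf y hy).2 (forall_mem_range.2 fun i => ?_)
  calc f x ≤ a i + x * e i := (hf x hx).1 (mem_range_self i)
    _ ≤ a i + y * e i := by gcongr; exact he i

theorem concaveOn_of_isGLB_affine
    (hf : ∀ ε ∈ Ici (0 : ℝ), IsGLB (range fun i => a i + ε * e i) (f ε)) :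
    ConcaveOn ℝ (Ici 0) f := by
  refine ⟨convex_Ici 0, fun x hx y hy s t hs ht hst => ?_⟩
  refine (hf _ (convex_Ici 0 hx hy hs ht hst)).2 (forall_mem_range.2 fun i => ?_)
  have hxi := (hf x hx).1 (mem_range_self i)
  have hyi := (hf y hy).1 (mem_range_self i)
  simp only [smul_eq_mul] at hxi hyi ⊢
  calc s * f x + t * f y ≤ s * (a i + x * e i) + t * (a i + y * e i) := by gcongr
    _ = a i + (s * x + t * y) * e i := by linear_combination a i * hst

theorem continuousOn_of_isGLB_affine (he : ∀ i, 0 ≤ e i)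
    (hf : ∀ ε ∈ Ici (0 : ℝ), IsGLB (range fun i => a i + ε * e i) (f ε)) :
    ContinuousOn f (Ici 0) := by
  refine (concaveOn_of_isGLB_affine hf).continuousOn_Ici
    (tendsto_order.2 ⟨fun y hy => ?_, fun y hy => ?_⟩)
  · filter_upwards [self_mem_nhdsWithin] with ε hε
    exact hy.trans_le (monotoneOn_of_isGLB_affine he hf self_mem_Ici hε hε)
  · obtain ⟨_, ⟨i, rfl⟩, -, hiy⟩ := (hf 0 self_mem_Ici).exists_between hy
    have hline : Tendsto (fun ε => a i + ε * e i) (𝓝[Ici 0] 0) (𝓝 (a i + 0 * e i)) :=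
      (by fun_prop : Continuous fun ε : ℝ => a i + ε * e i).continuousWithinAt
    filter_upwards [hline.eventually (gt_mem_nhds hiy), self_mem_nhdsWithin] with ε hεi hε
    exact ((hf ε hε).1 (mem_range_self i)).trans_lt hεi

end AffineInfimum

section Support

variable {X : Type*} [TopologicalSpace X] [MeasurableSpace X]

theorem msupport_eq_support (μ : Measure X) : msupport μ = μ.support := by
  ext x
  simp only [msupport, Measure.support_eq_forall_isOpen, mem_ofPred_eq, pos_iff_ne_zero]
  exact forall_congr' fun U => forall_comm

theorem ae_mem_msupport [HereditarilyLindelofSpace X] (μ : Measure X) :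
    ∀ᵐ x ∂μ, x ∈ msupport μ := by
  rw [msupport_eq_support]
  exact Measure.support_mem_ae

theorem ae_mem_msupport_fst_prod_msupport_snd {Y : Type*} [TopologicalSpace Y] [MeasurableSpace Y]
    [HereditarilyLindelofSpace X] [HereditarilyLindelofSpace Y] (γ : Measure (X × Y)) :
    ∀ᵐ p ∂γ, p ∈ msupport γ.fst ×ˢ msupport γ.snd :=
  (ae_of_ae_map measurable_fst.aemeasurable (ae_mem_msupport γ.fst)).and
    (ae_of_ae_map measurable_snd.aemeasurable (ae_mem_msupport γ.snd))

theorem ContinuousOn.integrable_of_ae_mem [OpensMeasurableSpace X] [T2Space X] {μ : Measure X}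
    [IsFiniteMeasure μ] {K : Set X} {f : X → ℝ} (hf : ContinuousOn f K) (hK : IsCompact K)
    (hμK : ∀ᵐ x ∂μ, x ∈ K) : Integrable f μ := by
  simpa only [IntegrableOn, Measure.restrict_eq_self_of_ae_mem hμK] using
    hf.integrableOn_compact (μ := μ) hK

end Support

section Entropy

variable {Ω : Type*} [MeasurableSpace Ω] {γ q : Measure Ω}

theorem Ent_nonneg [IsProbabilityMeasure γ] [IsProbabilityMeasure q] : 0 ≤ Ent γ q := by
  rw [Ent]
  split_ifs with h
  · obtain ⟨hγq, hint⟩ := h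
    have hmass : ∫ x, ((γ.rnDeriv q x).toReal - 1) ∂q = 0 := by
      rw [integral_sub Measure.integrable_toReal_rnDeriv (integrable_const 1),
        Measure.integral_toReal_rnDeriv hγq]
      simp
    have hpt : ∀ x, (γ.rnDeriv q x).toReal - 1 ≤
        (γ.rnDeriv q x).toReal * Real.log (γ.rnDeriv q x).toReal := fun x => by
      have := InformationTheory.klFun_nonneg (ENNReal.toReal_nonneg (a := γ.rnDeriv q x))
      rw [InformationTheory.klFun] at this
      linarith
    exact EReal.coe_nonneg.2 (hmass ▸ integral_mono
      (Measure.integrable_toReal_rnDeriv.sub (integrable_const 1)) hint hpt)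
  · exact le_top

theorem Ent_self [IsProbabilityMeasure q] : Ent q q = 0 := by
  have hzero : (fun x => (q.rnDeriv q x).toReal * Real.log (q.rnDeriv q x).toReal) =ᵐ[q] 0 := by
    filter_upwards [Measure.rnDeriv_self q] with x hx
    simp [hx]
  rw [Ent, if_pos ⟨Measure.AbsolutelyContinuous.rfl, (integrable_zero _ _ _).congr hzero.symm⟩,
    integral_congr_ae hzero]
  simp

theorem rnDeriv_le_of_le_smul [SigmaFinite q] {C : ℝ≥0∞} (h : γ ≤ C • q) :
    γ.rnDeriv q ≤ᵐ[q] fun _ => C := by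
  refine ae_le_of_forall_setLIntegral_le_of_sigmaFinite (γ.measurable_rnDeriv q) fun s _ _ => ?_
  rw [setLIntegral_const]
  exact (Measure.setLIntegral_rnDeriv_le s).trans (h s)

theorem Ent_ne_top_of_le_smul [IsFiniteMeasure q] {C : ℝ≥0} (h : γ ≤ (C : ℝ≥0∞) • q) :
    Ent γ q ≠ ⊤ := by
  obtain ⟨B, hB⟩ := (isCompact_Icc (a := (0 : ℝ)) (b := C)).exists_bound_of_continuousOn
    Real.continuous_mul_log.continuousOn
  have hint : Integrable (fun x => (γ.rnDeriv q x).toReal * Real.log (γ.rnDeriv q x).toReal) q := by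
    refine .of_bound (Real.continuous_mul_log.measurable.comp
      (γ.measurable_rnDeriv q).ennreal_toReal).aestronglyMeasurable B ?_
    filter_upwards [rnDeriv_le_of_le_smul h] with x hx
    exact hB _
      ⟨ENNReal.toReal_nonneg, ENNReal.toReal_le_of_le_ofReal C.coe_nonneg (by simpa using hx)⟩
  rw [Ent, if_pos ⟨Measure.absolutelyContinuous_of_le_smul h, hint⟩]
  exact EReal.coe_ne_top _

end Entropy

section Integrals

variable {X : Type*} [MeasurableSpace X] {f g : X → ℝ}

theorem integral_le_integral_add_of_ae_mem {μ ν : Measure X} [IsProbabilityMeasure μ]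
    [IsProbabilityMeasure ν] {S : Set X} {δ : ℝ} (hμ : ∀ᵐ x ∂μ, x ∈ S) (hν : ∀ᵐ x ∂ν, x ∈ S)
    (hfμ : Integrable f μ) (hfν : Integrable f ν) (hf : ∀ x ∈ S, ∀ y ∈ S, f x ≤ f y + δ) :
    ∫ x, f x ∂μ ≤ ∫ y, f y + δ ∂ν := by
  have hpt : ∀ y ∈ S, ∫ x, f x ∂μ ≤ f y + δ := fun y hy => by
    simpa using integral_mono_ae hfμ (integrable_const (f y + δ)) (hμ.mono fun x hx => hf x hx y hy)
  simpa using integral_mono_ae (integrable_const _) (hfν.add (integrable_const δ)) (hν.mono hpt)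

theorem integral_sum_smul_le_integral_sum_smul {ι : Type*} [Fintype ι] {μ ν : ι → Measure X}
    {w : ι → ℝ≥0∞} (hw : ∀ i, w i ≠ ⊤) (hf : ∀ i, Integrable f (μ i)) (hg : ∀ i, Integrable g (ν i))
    (h : ∀ i, w i ≠ 0 → ∫ x, f x ∂μ i ≤ ∫ x, g x ∂ν i) :
    ∫ x, f x ∂(∑ i, w i • μ i) ≤ ∫ x, g x ∂(∑ i, w i • ν i) := by
  rw [integral_finsetSum_measure fun i _ => (hf i).smul_measure (hw i),
    integral_finsetSum_measure fun i _ => (hg i).smul_measure (hw i)]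
  refine Finset.sum_le_sum fun i _ => ?_
  rw [integral_smul_measure, integral_smul_measure, smul_eq_mul, smul_eq_mul]
  rcases eq_or_ne (w i) 0 with hi | hi
  · simp [hi]
  · exact mul_le_mul_of_nonneg_left (h i hi) ENNReal.toReal_nonneg

end Integrals

theorem IsCompact.exists_measurable_fin_dist_lt_of_eq {X : Type*} [MetricSpace X]
    [MeasurableSpace X] [OpensMeasurableSpace X] [SecondCountableTopology X] {K : Set X}
    (hK : IsCompact K) {η : ℝ} (hη : 0 < η) :
    ∃ (n : ℕ) (a : X → Fin n), Measurable a ∧ ∀ x ∈ K, ∀ y ∈ K, a x = a y → dist x y < η := by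
  rcases isEmpty_or_nonempty X with hX | hX
  · exact ⟨0, isEmptyElim, measurable_of_subsingleton_codomain _, fun x => isEmptyElim x⟩
  obtain ⟨e, he⟩ := TopologicalSpace.exists_dense_seq X
  obtain ⟨s, hs⟩ := hK.elim_finite_subcover (fun k => Metric.ball (e k) (η / 2))
    (fun _ => Metric.isOpen_ball) fun x _ => mem_iUnion.2 <|
      (he.exists_mem_open Metric.isOpen_ball ⟨x, Metric.mem_ball_self (half_pos hη)⟩).imp
        fun _ => Metric.mem_ball_comm.1
  let N := s.sup id
  let idx := SimpleFunc.nearestPtInd e N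
  have hnear : ∀ x ∈ K, dist (e (idx x)) x < η / 2 := by
    intro x hx
    obtain ⟨k, hk, hxk⟩ := mem_iUnion₂.1 (hs hx)
    have := SimpleFunc.edist_nearestPt_le e x (Finset.le_sup (f := id) hk)
    rw [edist_dist, edist_dist, ENNReal.ofReal_le_ofReal_iff dist_nonneg] at this
    exact this.trans_lt (by rwa [dist_comm, ← Metric.mem_ball])
  refine ⟨N + 1, fun x => Fin.clamp (idx x) N,
    (measurable_from_nat (f := (Fin.clamp · N))).comp idx.measurable, fun x hx y hy hxy => ?_⟩
  have hidx : idx x = idx y := by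
    have hle : ∀ z, idx z ≤ N := SimpleFunc.nearestPtInd_le e N
    simpa [Fin.ext_iff, min_eq_left (hle _)] using hxy
  calc dist x y ≤ dist (e (idx x)) x + dist (e (idx y)) y := by
        rw [hidx]; exact dist_triangle_left _ _ _
    _ < η / 2 + η / 2 := add_lt_add (hnear x hx) (hnear y hy)
    _ = η := add_halves η

section BlockCoupling

open ProbabilityTheory

variable {α β : Type*} [MeasurableSpace α] [MeasurableSpace β]

theorem exists_cond_le_smul (μ : Measure α) (s : Set α) : ∃ C : ℝ≥0, μ[|s] ≤ (C : ℝ≥0∞) • μ := by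
  by_cases hs : μ s = 0
  · exact ⟨0, by simp [cond_eq_zero_of_meas_eq_zero hs]⟩
  · refine ⟨(μ s)⁻¹.toNNReal, ?_⟩
    rw [ENNReal.coe_toNNReal (ENNReal.inv_ne_top.2 hs), ProbabilityTheory.cond]
    gcongr
    exact Measure.restrict_le_self

theorem exists_prod_cond_le_smul (μ : Measure α) (ν : Measure β) [SFinite ν] (s : Set α)
    (t : Set β) : ∃ C : ℝ≥0, (μ[|s]).prod (ν[|t]) ≤ (C : ℝ≥0∞) • μ.prod ν := by
  obtain ⟨C₁, h₁⟩ := exists_cond_le_smul μ s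
  obtain ⟨C₂, h₂⟩ := exists_cond_le_smul ν t
  refine ⟨C₁ * C₂, ?_⟩
  calc (μ[|s]).prod (ν[|t]) ≤ ((C₁ : ℝ≥0∞) • μ).prod ((C₂ : ℝ≥0∞) • ν) := Measure.prod_mono h₁ h₂
    _ = _ := by rw [Measure.prod_smul_left, Measure.prod_smul_right, smul_smul, ENNReal.coe_mul]

theorem fst_smul_prod_cond (μ : Measure α) {ν : Measure β} [IsFiniteMeasure ν] {t : Set β}
    {w : ℝ≥0∞} (hw : w ≤ ν t) : (w • μ.prod (ν[|t])).fst = w • μ := by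
  rw [Measure.fst, Measure.map_smul, ← Measure.fst]
  rcases eq_or_ne w 0 with rfl | hw0
  · simp
  have := cond_isProbabilityMeasure (ne_bot_of_le_ne_bot hw0 hw)
  rw [Measure.fst_prod]

theorem snd_smul_cond_prod {μ : Measure α} [IsFiniteMeasure μ] (ν : Measure β) [SFinite ν]
    {s : Set α} {w : ℝ≥0∞} (hw : w ≤ μ s) : (w • (μ[|s]).prod ν).snd = w • ν := by
  rw [Measure.snd, Measure.map_smul, ← Measure.snd]
  rcases eq_or_ne w 0 with rfl | hw0
  · simp
  have := cond_isProbabilityMeasure (ne_bot_of_le_ne_bot hw0 hw)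
  rw [Measure.snd_prod]

variable {ι κ : Type*} {γ : Measure (α × β)} {a : α → ι} {b : β → κ}

theorem measure_prodMap_preimage_le_fst (k : ι × κ) :
    γ (Prod.map a b ⁻¹' {k}) ≤ γ.fst (a ⁻¹' {k.1}) :=
  (measure_mono fun _ hp => congrArg Prod.fst hp).trans
    (Measure.le_map_apply measurable_fst.aemeasurable _)

theorem measure_prodMap_preimage_le_snd (k : ι × κ) :
    γ (Prod.map a b ⁻¹' {k}) ≤ γ.snd (b ⁻¹' {k.2}) :=
  (measure_mono fun _ hp => congrArg Prod.snd hp).trans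
    (Measure.le_map_apply measurable_snd.aemeasurable _)

variable [Fintype ι] [Fintype κ]

def blockCoupling (γ : Measure (α × β)) (a : α → ι) (b : β → κ) : Measure (α × β) :=
  ∑ k : ι × κ, γ (Prod.map a b ⁻¹' {k}) • (γ.fst[|a ← k.1]).prod (γ.snd[|b ← k.2])

theorem exists_blockCoupling_le_smul [IsFiniteMeasure γ] :
    ∃ C : ℝ≥0, blockCoupling γ a b ≤ (C : ℝ≥0∞) • γ.fst.prod γ.snd := by
  choose C hC using fun k : ι × κ =>
    exists_prod_cond_le_smul γ.fst γ.snd (a ⁻¹' {k.1}) (b ⁻¹' {k.2})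
  refine ⟨∑ k, (γ (Prod.map a b ⁻¹' {k})).toNNReal * C k, ?_⟩
  rw [ENNReal.ofNNReal_finsetSum, Finset.sum_smul]
  refine Finset.sum_le_sum fun k _ => ?_
  rw [ENNReal.coe_mul, ENNReal.coe_toNNReal (measure_ne_top _ _), mul_smul]
  gcongr
  exact hC k

variable [MeasurableSpace ι] [MeasurableSpace κ] [DiscreteMeasurableSpace ι]
  [DiscreteMeasurableSpace κ]

theorem sum_measure_prodMap_preimage_fst (ha : Measurable a) (hb : Measurable b) (i : ι) :
    ∑ j, γ (Prod.map a b ⁻¹' {(i, j)}) = γ.fst (a ⁻¹' {i}) := by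
  have h := sum_measure_preimage_singleton (μ := γ) ({i} ×ˢ Finset.univ)
    fun _ _ => ha.prodMap hb (measurableSet_singleton _)
  rw [Finset.sum_product, Finset.sum_singleton] at h
  rw [h, Measure.fst_apply (ha (measurableSet_singleton i))]
  congr 1
  ext
  simp [Prod.ext_iff, eq_comm]

theorem sum_measure_prodMap_preimage_snd (ha : Measurable a) (hb : Measurable b) (j : κ) :
    ∑ i, γ (Prod.map a b ⁻¹' {(i, j)}) = γ.snd (b ⁻¹' {j}) := by
  have h := sum_measure_preimage_singleton (μ := γ) (Finset.univ ×ˢ {j})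
    fun _ _ => ha.prodMap hb (measurableSet_singleton _)
  rw [Finset.sum_product_right, Finset.sum_singleton] at h
  rw [h, Measure.snd_apply (hb (measurableSet_singleton j))]
  congr 1
  ext
  simp [Prod.ext_iff, eq_comm]

theorem blockCoupling_fst [IsFiniteMeasure γ] (ha : Measurable a) (hb : Measurable b) :
    (blockCoupling γ a b).fst = γ.fst := by
  calc (blockCoupling γ a b).fst = ∑ k : ι × κ, γ (Prod.map a b ⁻¹' {k}) • γ.fst[|a ← k.1] := by
        rw [blockCoupling, Measure.fst, Measure.map_finset_sum' measurable_fst.aemeasurable]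
        exact Finset.sum_congr rfl fun k _ =>
          fst_smul_prod_cond _ (measure_prodMap_preimage_le_snd k)
    _ = ∑ i, γ.fst (a ⁻¹' {i}) • γ.fst[|a ← i] := by
        simp_rw [Fintype.sum_prod_type, ← Finset.sum_smul, sum_measure_prodMap_preimage_fst ha hb]
    _ = γ.fst := sum_meas_smul_cond_fiber ha γ.fst

theorem blockCoupling_snd [IsFiniteMeasure γ] (ha : Measurable a) (hb : Measurable b) :
    (blockCoupling γ a b).snd = γ.snd := by
  calc (blockCoupling γ a b).snd = ∑ k : ι × κ, γ (Prod.map a b ⁻¹' {k}) • γ.snd[|b ← k.2] := by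
        rw [blockCoupling, Measure.snd, Measure.map_finset_sum' measurable_snd.aemeasurable]
        exact Finset.sum_congr rfl fun k _ =>
          snd_smul_cond_prod _ (measure_prodMap_preimage_le_fst k)
    _ = ∑ j, γ.snd (b ⁻¹' {j}) • γ.snd[|b ← j] := by
        simp_rw [Fintype.sum_prod_type_right, ← Finset.sum_smul,
          sum_measure_prodMap_preimage_snd ha hb]
    _ = γ.snd := sum_meas_smul_cond_fiber hb γ.snd

theorem integral_blockCoupling_le [IsProbabilityMeasure γ] (ha : Measurable a) (hb : Measurable b)
    {K : Set (α × β)} (hγK : ∀ᵐ p ∂γ, p ∈ K) (hqK : ∀ᵐ p ∂γ.fst.prod γ.snd, p ∈ K)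
    {c : α × β → ℝ} (hcγ : Integrable c γ) (hcq : Integrable c (γ.fst.prod γ.snd)) {δ : ℝ}
    (hosc : ∀ p ∈ K, ∀ p' ∈ K, Prod.map a b p = Prod.map a b p' → c p ≤ c p' + δ) :
    ∫ p, c p ∂blockCoupling γ a b ≤ ∫ p, c p ∂γ + δ := by
  have hab : Measurable (Prod.map a b) := ha.prodMap hb
  have hcν : ∀ k : ι × κ, Integrable c ((γ.fst[|a ← k.1]).prod (γ.snd[|b ← k.2])) := fun k => by
    obtain ⟨C, hC⟩ := exists_prod_cond_le_smul γ.fst γ.snd (a ⁻¹' {k.1}) (b ⁻¹' {k.2})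
    exact (hcq.smul_measure ENNReal.coe_ne_top).mono_measure hC
  have hcγ' : ∀ k : ι × κ, Integrable c γ[|Prod.map a b ← k] := fun k => by
    obtain ⟨C, hC⟩ := exists_cond_le_smul γ (Prod.map a b ⁻¹' {k})
    exact (hcγ.smul_measure ENNReal.coe_ne_top).mono_measure hC
  calc ∫ p, c p ∂blockCoupling γ a b
      ≤ ∫ p, c p + δ ∂(∑ k, γ (Prod.map a b ⁻¹' {k}) • γ[|Prod.map a b ← k]) := by
        refine integral_sum_smul_le_integral_sum_smul (fun _ => measure_ne_top _ _) hcν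
          (fun k => (hcγ' k).add (integrable_const δ)) fun k hk => ?_
        have := cond_isProbabilityMeasure hk
        have := cond_isProbabilityMeasure
          (ne_bot_of_le_ne_bot hk (measure_prodMap_preimage_le_fst k))
        have := cond_isProbabilityMeasure
          (ne_bot_of_le_ne_bot hk (measure_prodMap_preimage_le_snd k))
        have hν : ∀ᵐ p ∂(γ.fst[|a ← k.1]).prod (γ.snd[|b ← k.2]), p ∈ K ∩ Prod.map a b ⁻¹' {k} := by
          filter_upwards [(cond_absolutelyContinuous.prod cond_absolutelyContinuous).ae_le hqK,
            Measure.quasiMeasurePreserving_fst.ae (ae_cond_mem (ha (measurableSet_singleton k.1))),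
            Measure.quasiMeasurePreserving_snd.ae (ae_cond_mem (hb (measurableSet_singleton k.2)))]
            with p hK h1 h2 using ⟨hK, Prod.ext h1 h2⟩
        have hγk : ∀ᵐ p ∂γ[|Prod.map a b ← k], p ∈ K ∩ Prod.map a b ⁻¹' {k} := by
          filter_upwards [cond_absolutelyContinuous.ae_le hγK,
            ae_cond_mem (hab (measurableSet_singleton k))] with p hK hk using ⟨hK, hk⟩
        refine integral_le_integral_add_of_ae_mem hν hγk
          (hcν k) (hcγ' k) fun p hp p' hp' => hosc p hp.1 p' hp'.1 (hp.2.trans hp'.2.symm)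
    _ = ∫ p, c p + δ ∂γ := by rw [sum_meas_smul_cond_fiber hab γ]
    _ = ∫ p, c p ∂γ + δ := by simp [integral_add hcγ (integrable_const δ)]

end BlockCoupling

section FiniteEntropyCouplings

variable {α β : Type*} [MeasurableSpace α] [MeasurableSpace β] {μm : Measure α} {μp : Measure β}
  [IsProbabilityMeasure μm] [IsProbabilityMeasure μp] {c : α × β → ℝ} {ε : ℝ}

def finiteEntropyCouplings (μm : Measure α) (μp : Measure β) : Set (Measure (α × β)) :=
  {γ | IsProbabilityMeasure γ ∧ γ.fst = μm ∧ γ.snd = μp ∧ Ent γ (μm.prod μp) ≠ ⊤}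

theorem coe_integral_add_mul_toReal_Ent (γ : Measure (α × β)) [IsProbabilityMeasure γ]
    (hEnt : Ent γ (μm.prod μp) ≠ ⊤) :
    ((∫ p, c p ∂γ + ε * (Ent γ (μm.prod μp)).toReal : ℝ) : EReal) =
      ∫ p, c p ∂γ + ε * Ent γ (μm.prod μp) := by
  rw [EReal.coe_add, EReal.coe_mul,
    EReal.coe_toReal hEnt (ne_bot_of_le_ne_bot EReal.zero_ne_bot Ent_nonneg)]

theorem entCost_le_of_mem_finiteEntropyCouplings {γ : Measure (α × β)}
    (hγ : γ ∈ finiteEntropyCouplings μm μp) :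
    entCost μm μp c ε ≤ ((∫ p, c p ∂γ + ε * (Ent γ (μm.prod μp)).toReal : ℝ) : EReal) := by
  obtain ⟨hprob, hfst, hsnd, hEnt⟩ := hγ
  exact sInf_le ⟨γ, hprob, hfst, hsnd, coe_integral_add_mul_toReal_Ent γ hEnt⟩

end FiniteEntropyCouplings

section EntropicCost

variable {α β : Type*} [MetricSpace α] [MeasurableSpace α] [BorelSpace α]
  [SecondCountableTopology α] [MetricSpace β] [MeasurableSpace β] [BorelSpace β]
  [SecondCountableTopology β] {c : α × β → ℝ}

theorem exists_Ent_ne_top_integral_le_add (γ : Measure (α × β)) [IsProbabilityMeasure γ]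
    (hXm : IsCompact (msupport γ.fst)) (hXp : IsCompact (msupport γ.snd))
    (hc : ContinuousOn c (msupport γ.fst ×ˢ msupport γ.snd)) {δ : ℝ} (hδ : 0 < δ) :
    ∃ γ' : Measure (α × β), IsProbabilityMeasure γ' ∧ γ'.fst = γ.fst ∧ γ'.snd = γ.snd ∧
      Ent γ' (γ.fst.prod γ.snd) ≠ ⊤ ∧ ∫ p, c p ∂γ' ≤ ∫ p, c p ∂γ + δ := by
  set K := msupport γ.fst ×ˢ msupport γ.snd
  have hK : IsCompact K := hXm.prod hXp
  obtain ⟨η, hη, hcη⟩ :=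
    Metric.uniformContinuousOn_iff.1 (hK.uniformContinuousOn_of_continuous hc) δ hδ
  obtain ⟨n, a, ha, haη⟩ := hXm.exists_measurable_fin_dist_lt_of_eq hη
  obtain ⟨m, b, hb, hbη⟩ := hXp.exists_measurable_fin_dist_lt_of_eq hη
  have hγK : ∀ᵐ p ∂γ, p ∈ K := ae_mem_msupport_fst_prod_msupport_snd γ
  have hqK : ∀ᵐ p ∂γ.fst.prod γ.snd, p ∈ K := by
    have := ae_mem_msupport_fst_prod_msupport_snd (γ.fst.prod γ.snd)
    rwa [Measure.fst_prod, Measure.snd_prod] at this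
  obtain ⟨C, hC⟩ := exists_blockCoupling_le_smul (γ := γ) (a := a) (b := b)
  have hfst := blockCoupling_fst (γ := γ) ha hb
  refine ⟨blockCoupling γ a b, ⟨by rw [← Measure.fst_univ, hfst, Measure.fst_univ, measure_univ]⟩,
    hfst, blockCoupling_snd ha hb, Ent_ne_top_of_le_smul hC,
    integral_blockCoupling_le ha hb hγK hqK (hc.integrable_of_ae_mem hK hγK)
      (hc.integrable_of_ae_mem hK hqK) fun p hp p' hp' hpp' => ?_⟩
  have hdist : dist p p' < η := by
    rw [Prod.dist_eq]
    exact max_lt (haη _ hp.1 _ hp'.1 (congrArg Prod.fst hpp'))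
      (hbη _ hp.2 _ hp'.2 (congrArg Prod.snd hpp'))
  have := hcη p hp p' hp' hdist
  rw [Real.dist_eq, abs_lt] at this
  linarith

variable {μm : Measure α} {μp : Measure β} [IsProbabilityMeasure μm] [IsProbabilityMeasure μp]
  {ε : ℝ}

theorem entCost_ne_bot (hXm : IsCompact (msupport μm)) (hXp : IsCompact (msupport μp))
    (hc : ContinuousOn c (msupport μm ×ˢ msupport μp)) (hε : 0 ≤ ε) : entCost μm μp c ε ≠ ⊥ := by
  obtain ⟨m, hm⟩ := (hXm.prod hXp).bddBelow_image hc
  refine ne_bot_of_le_ne_bot (EReal.coe_ne_bot m) (le_sInf ?_)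
  rintro _ ⟨γ, hγ, rfl, rfl, rfl⟩
  have hγK := ae_mem_msupport_fst_prod_msupport_snd γ
  have hcm : m ≤ ∫ p, c p ∂γ := by
    simpa using integral_mono_ae (integrable_const m) (hc.integrable_of_ae_mem (hXm.prod hXp) hγK)
      (hγK.mono fun p hp => hm (mem_image_of_mem c hp))
  calc (m : EReal) = m + 0 := (add_zero _).symm
    _ ≤ _ := add_le_add (EReal.coe_le_coe_iff.2 hcm)
      (EReal.mul_nonneg (EReal.coe_nonneg.2 hε) Ent_nonneg)

theorem isGLB_entCost (hXm : IsCompact (msupport μm)) (hXp : IsCompact (msupport μp))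
    (hc : ContinuousOn c (msupport μm ×ˢ msupport μp)) (hε : 0 ≤ ε) :
    IsGLB (range fun γ : finiteEntropyCouplings μm μp =>
        ∫ p, c p ∂(γ : Measure (α × β)) + ε * (Ent (γ : Measure (α × β)) (μm.prod μp)).toReal)
      (entCost μm μp c ε).toReal := by
  have hprod : μm.prod μp ∈ finiteEntropyCouplings μm μp :=
    ⟨inferInstance, Measure.fst_prod, Measure.snd_prod, by simp [Ent_self]⟩
  have htop : entCost μm μp c ε ≠ ⊤ :=
    ((entCost_le_of_mem_finiteEntropyCouplings hprod).trans_lt (EReal.coe_lt_top _)).ne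
  have hbot := entCost_ne_bot hXm hXp hc hε
  refine ⟨forall_mem_range.2 fun γ => ?_, fun y hy => ?_⟩
  · have := EReal.toReal_le_toReal (entCost_le_of_mem_finiteEntropyCouplings γ.2) hbot
      (EReal.coe_ne_top _)
    rwa [EReal.toReal_coe] at this
  suffices (y : EReal) ≤ entCost μm μp c ε by
    simpa using EReal.toReal_le_toReal this (EReal.coe_ne_bot y) htop
  refine le_sInf ?_
  rintro _ ⟨γ, hγ, hfst, hsnd, rfl⟩
  rcases ne_or_eq (Ent γ (μm.prod μp)) ⊤ with hEnt | hEnt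
  · rw [← coe_integral_add_mul_toReal_Ent γ hEnt, EReal.coe_le_coe_iff]
    exact hy (mem_range_self (⟨γ, hγ, hfst, hsnd, hEnt⟩ : finiteEntropyCouplings μm μp))
  rcases hε.eq_or_lt with rfl | hεpos
  -- At `ε = 0` a coupling of infinite entropy is approached by finite-entropy ones.
  · rw [EReal.coe_zero, zero_mul, add_zero, EReal.coe_le_coe_iff]
    refine le_of_forall_pos_le_add fun δ hδ => ?_
    subst hfst hsnd
    obtain ⟨γ', hγ', hfst', hsnd', hEnt', hcost⟩ :=
      exists_Ent_ne_top_integral_le_add γ hXm hXp hc hδ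
    have := hy (mem_range_self (⟨γ', hγ', hfst', hsnd', hEnt'⟩ : finiteEntropyCouplings _ _))
    simp only [zero_mul, add_zero] at this
    linarith
  · rw [hEnt, EReal.coe_mul_top_of_pos hεpos, EReal.coe_add_top]
    exact le_top

end EntropicCost

/-- The entropic cost `ε ↦ v_ε` is continuous, non-decreasing and concave on `[0,∞)`. -/
theorem entCost_continuous_monotone_concave {d : ℕ}
    (μm μp : Measure (EuclideanSpace ℝ (Fin d)))
    [IsProbabilityMeasure μm] [IsProbabilityMeasure μp]
    (hXm : IsCompact (msupport μm)) (hXp : IsCompact (msupport μp))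
    (c : EuclideanSpace ℝ (Fin d) × EuclideanSpace ℝ (Fin d) → ℝ)
    (hc : ContinuousOn c (msupport μm ×ˢ msupport μp)) :
    ContinuousOn (fun ε : ℝ => (entCost μm μp c ε).toReal) (Set.Ici 0) ∧
    MonotoneOn (fun ε : ℝ => (entCost μm μp c ε).toReal) (Set.Ici 0) ∧
    ConcaveOn ℝ (Set.Ici 0) (fun ε : ℝ => (entCost μm μp c ε).toReal) := by
  have hGLB := fun ε (hε : ε ∈ Ici (0 : ℝ)) => isGLB_entCost hXm hXp hc hε
  have hEnt : ∀ γ : finiteEntropyCouplings μm μp,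
      0 ≤ (Ent (γ : Measure _) (μm.prod μp)).toReal := fun γ => by
    have := γ.2.1
    exact EReal.toReal_nonneg Ent_nonneg
  exact ⟨continuousOn_of_isGLB_affine hEnt hGLB, monotoneOn_of_isGLB_affine hEnt hGLB,
    concaveOn_of_isGLB_affine hGLB⟩

end
end

section
/- Let μ⁻ = μ⁺ be the Lebesgue measure restricted to [0,1] ⊆ ℝ and let c(x,y) = |x−y|. Then v_0 = 0 and for every ε > 0: v_ε ≥ −ε·log(2ε); in particular v_ε ≥ v_0 + ε·log(1/ε) − ε·log 2, so the rate ε·log(1/ε) (with constant 1 = d, not d/2) is attained for this Lipschitz cost. -/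
open MeasureTheory Real Set Filter Classical
open scoped ENNReal NNReal Topology

noncomputable section

/-!
`v₀ = 0` is attained by the diagonal coupling. The lower bound is the Gibbs variational
inequality: if `γ = ρ·(μ⁻ ⊗ μ⁺)`, comparing `ρ` pointwise with the Gibbs density `e^{-c/ε}/Z`
through `log t ≤ t - 1` gives `∫ c dγ + ε Ent(γ | μ⁻ ⊗ μ⁺) ≥ -ε log Z`, where
`Z = ∫ e^{-c/ε} d(μ⁻ ⊗ μ⁺)`. For `c = |x - y|` on `[0,1]²`, `Z ≤ ∫_ℝ e^{-|t|/ε} dt = 2ε`.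
-/

lemma mul_log_le_mul_log_add_sub {r h : ℝ} (hr : 0 ≤ r) (hh : 0 < h) :
    r * log h ≤ r * log r + h - r := by
  rcases hr.eq_or_lt with rfl | hr
  · simpa using hh.le
  · have key : r * (log h - log r) ≤ r * (h / r - 1) := by
      rw [← log_div hh.ne' hr.ne']
      exact mul_le_mul_of_nonneg_left (log_le_sub_one_of_pos (div_pos hh hr)) hr.le
    rw [mul_sub, mul_sub, mul_div_cancel₀ _ hr.ne', mul_one] at key
    linarith

lemma MeasureTheory.Measure.AbsolutelyContinuous.neZero {α : Type*} [MeasurableSpace α]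
    {γ q : Measure α} [NeZero γ] (h : γ ≪ q) : NeZero q :=
  ⟨fun hq => NeZero.ne γ (Measure.measure_univ_eq_zero.mp (h (by simp [hq])))⟩

theorem integral_sub_log_integral_exp_le_Ent {α : Type*} [MeasurableSpace α]
    {γ q : Measure α} [IsProbabilityMeasure γ] [SigmaFinite q] {f : α → ℝ}
    (hf : Integrable f γ) (hexp : Integrable (fun x => exp (f x)) q) :
    ((∫ x, f x ∂γ - log (∫ x, exp (f x) ∂q) : ℝ) : EReal) ≤ Ent γ q := by
  unfold Ent
  split_ifs with h
  swap
  · exact le_top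
  obtain ⟨hγq, hint⟩ := h
  rw [EReal.coe_le_coe_iff]
  set ρ : α → ℝ := fun x => (γ.rnDeriv q x).toReal
  set Z := ∫ x, exp (f x) ∂q
  have := hγq.neZero
  have hZ : 0 < Z := integral_exp_pos hexp
  have hρ : Integrable ρ q := Measure.integrable_toReal_rnDeriv
  have hρf : Integrable (fun x => ρ x * f x) q := (integrable_toReal_rnDeriv_mul_iff hγq).mpr hf
  have hexpZ : Integrable (fun x => exp (f x) / Z) q := hexp.div_const Z
  have hent : Integrable (fun x => ρ x * log (ρ x) + exp (f x) / Z) q := hint.add hexpZ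
  have hρ_one : ∫ x, ρ x ∂q = 1 := by simp [ρ, Measure.integral_toReal_rnDeriv hγq]
  calc ∫ x, f x ∂γ - log Z = ∫ x, (ρ x * f x - log Z * ρ x) ∂q := by
        rw [integral_sub hρf (hρ.const_mul _), integral_const_mul, hρ_one, mul_one,
          integral_toReal_rnDeriv_mul hγq]
    _ ≤ ∫ x, (ρ x * log (ρ x) + exp (f x) / Z - ρ x) ∂q := by
        refine integral_mono (hρf.sub (hρ.const_mul _)) (hent.sub hρ) fun x => ?_
        have := mul_log_le_mul_log_add_sub (r := ρ x) ENNReal.toReal_nonneg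
          (div_pos (exp_pos (f x)) hZ)
        rw [log_div (exp_pos _).ne' hZ.ne', log_exp] at this
        linarith
    _ = ∫ x, ρ x * log (ρ x) ∂q := by
        rw [integral_sub hent hρ, integral_add hint hexpZ, integral_div, hρ_one,
          div_self hZ.ne', add_sub_cancel_right]

theorem neg_mul_log_le_entCost {α β : Type*} [MeasurableSpace α] [MeasurableSpace β]
    {μm : Measure α} {μp : Measure β} [IsFiniteMeasure μm] [IsFiniteMeasure μp]
    {c : α × β → ℝ} {M : ℝ} (hc : AEStronglyMeasurable c (μm.prod μp))
    (hcM : ∀ᵐ p ∂(μm.prod μp), |c p| ≤ M) {ε Z : ℝ} (hε : 0 < ε)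
    (hZ : ∫ p, exp (-c p / ε) ∂(μm.prod μp) ≤ Z) :
    ((-ε * log Z : ℝ) : EReal) ≤ entCost μm μp c ε := by
  refine le_sInf ?_
  rintro _ ⟨γ, hγ, -, -, rfl⟩
  by_cases hγq : γ ≪ μm.prod μp
  swap
  · simp [Ent, hγq, EReal.coe_mul_top_of_pos hε]
  have := hγq.neZero
  have hcγ : Integrable c γ := .of_bound (hc.mono_ac hγq) M (hγq.ae_le hcM)
  have hexp : Integrable (fun p => exp (-c p / ε)) (μm.prod μp) := by
    refine .of_bound (by fun_prop) (exp (M / ε)) ?_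
    filter_upwards [hcM] with p hp
    rw [norm_of_nonneg (exp_pos _).le, exp_le_exp]
    exact div_le_div_of_nonneg_right (by linarith [neg_abs_le (c p)]) hε.le
  have hlogZ : log (∫ p, exp (-c p / ε) ∂(μm.prod μp)) ≤ log Z :=
    log_le_log (integral_exp_pos hexp) hZ
  have hgibbs := integral_sub_log_integral_exp_le_Ent (f := fun p => -c p / ε)
    (hcγ.neg.div_const ε) hexp
  rw [integral_div, integral_neg] at hgibbs
  calc ((-ε * log Z : ℝ) : EReal)
      ≤ ((∫ p, c p ∂γ + ε * (-(∫ p, c p ∂γ) / ε - log (∫ p, exp (-c p / ε) ∂(μm.prod μp))) : ℝ)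
          : EReal) := by
        rw [EReal.coe_le_coe_iff, mul_sub, mul_div_cancel₀ _ hε.ne']
        nlinarith
    _ ≤ _ := by
        rw [EReal.coe_add, EReal.coe_mul]
        gcongr

theorem entCost_zero_self_eq_zero {α : Type*} [MeasurableSpace α] (μ : Measure α)
    [IsProbabilityMeasure μ] {c : α × α → ℝ} (hc : Measurable c) (hc_nonneg : 0 ≤ c)
    (hc_diag : ∀ x, c (x, x) = 0) : entCost μ μ c 0 = 0 := by
  refine le_antisymm (sInf_le ?_) (le_sInf ?_)
  · have hdiag : Measurable fun x : α => (x, x) := measurable_id.prodMk measurable_id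
    refine ⟨μ.map fun x => (x, x), Measure.isProbabilityMeasure_map hdiag.aemeasurable,
      Measure.fst_map_prodMk measurable_id |>.trans Measure.map_id,
      Measure.snd_map_prodMk measurable_id |>.trans Measure.map_id, ?_⟩
    simp [integral_map hdiag.aemeasurable hc.aestronglyMeasurable, hc_diag]
  · rintro _ ⟨γ, -, -, -, rfl⟩
    simpa using integral_nonneg hc_nonneg

lemma integral_exp_neg_abs_div {ε : ℝ} (hε : 0 < ε) : ∫ y, exp (-|y| / ε) = 2 * ε := by
  have hIoi : ∫ y in Ioi (0 : ℝ), exp (-ε⁻¹ * y) = ε := by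
    rw [integral_exp_mul_Ioi (by simpa using hε) 0]
    simp
  rw [integral_comp_abs (f := fun y => exp (-y / ε))]
  simp_rw [neg_div, div_eq_inv_mul, ← neg_mul, hIoi]

lemma integral_prod_exp_neg_abs_sub_div_le (μ : Measure ℝ) [IsProbabilityMeasure μ] {s : Set ℝ}
    (hs : volume s ≠ ∞) {ε : ℝ} (hε : 0 < ε) :
    ∫ p, exp (-|p.1 - p.2| / ε) ∂(μ.prod (volume.restrict s)) ≤ 2 * ε := by
  have : IsFiniteMeasure (volume.restrict s) := isFiniteMeasure_restrict.mpr hs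
  have hint :
      Integrable (fun p : ℝ × ℝ => exp (-|p.1 - p.2| / ε)) (μ.prod (volume.restrict s)) := by
    refine .of_bound (by fun_prop) 1 (ae_of_all _ fun p => ?_)
    rw [norm_of_nonneg (exp_pos _).le, exp_le_one_iff]
    exact div_nonpos_of_nonpos_of_nonneg (neg_nonpos.mpr (abs_nonneg _)) hε.le
  have hinner (x : ℝ) : ∫ y in s, exp (-|x - y| / ε) ≤ 2 * ε := by
    have hfull : ∫ y, exp (-|x - y| / ε) = 2 * ε := by
      rw [integral_sub_left_eq_self (fun y => exp (-|y| / ε)), integral_exp_neg_abs_div hε]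
    rw [← hfull]
    exact setIntegral_le_integral (.of_integral_ne_zero (by rw [hfull]; positivity))
      (ae_of_all _ fun y => (exp_pos _).le)
  rw [integral_prod _ hint]
  refine (integral_mono hint.integral_prod_left (integrable_const _) hinner).trans ?_
  simp

lemma ae_restrict_Icc_prod_abs_sub_le (a b : ℝ) :
    ∀ᵐ p ∂((volume.restrict (Icc a b)).prod (volume.restrict (Icc a b))),
      |p.1 - p.2| ≤ b - a := by
  rw [Measure.prod_restrict]
  filter_upwards [ae_restrict_mem (measurableSet_Icc.prod measurableSet_Icc)]
    with p ⟨⟨hx₀, hx₁⟩, hy₀, hy₁⟩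
  rw [abs_sub_le_iff]
  constructor <;> linarith

/-- **Sharpness example**: for `μ⁻ = μ⁺ = Leb|_{[0,1]}` and `c(x,y) = |x−y|`, one has
`v₀ = 0` and `v_ε ≥ −ε log(2ε) = v₀ + ε log(1/ε) − ε log 2` for every `ε > 0`. -/
theorem entCost_sharpness_example :
    entCost (volume.restrict (Set.Icc (0 : ℝ) 1)) (volume.restrict (Set.Icc (0 : ℝ) 1))
        (fun p : ℝ × ℝ => |p.1 - p.2|) 0 = 0 ∧
    ∀ ε : ℝ, 0 < ε →
      ((-ε * Real.log (2 * ε) : ℝ) : EReal)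
        ≤ entCost (volume.restrict (Set.Icc (0 : ℝ) 1)) (volume.restrict (Set.Icc (0 : ℝ) 1))
            (fun p : ℝ × ℝ => |p.1 - p.2|) ε ∧
      ((ε * Real.log (1 / ε) - ε * Real.log 2 : ℝ) : EReal)
        ≤ entCost (volume.restrict (Set.Icc (0 : ℝ) 1)) (volume.restrict (Set.Icc (0 : ℝ) 1))
            (fun p : ℝ × ℝ => |p.1 - p.2|) ε := by
  have : IsProbabilityMeasure (volume.restrict (Icc (0 : ℝ) 1)) := ⟨by simp⟩
  refine ⟨entCost_zero_self_eq_zero _ (by fun_prop) (fun _ => abs_nonneg _) (by simp),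
    fun ε hε => ?_⟩
  have hv : ((-ε * log (2 * ε) : ℝ) : EReal) ≤ entCost (volume.restrict (Icc (0 : ℝ) 1))
      (volume.restrict (Icc (0 : ℝ) 1)) (fun p : ℝ × ℝ => |p.1 - p.2|) ε :=
    neg_mul_log_le_entCost (by fun_prop)
      ((ae_restrict_Icc_prod_abs_sub_le 0 1).mono fun _ h => (abs_abs _).trans_le h) hε
      (integral_prod_exp_neg_abs_sub_div_le _ measure_Icc_lt_top.ne hε)
  have hrate : ε * log (1 / ε) - ε * log 2 = -ε * log (2 * ε) := by
    rw [log_mul two_ne_zero hε.ne', one_div, log_inv]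
    ring
  exact ⟨hv, hrate ▸ hv⟩
end
end

section
/- Let f : ℝ^d → ℝ ∪ {+∞} be a proper convex lower semicontinuous function with Legendre transform f*, and set E(x,y) := f(x) + f*(y) − x·y ∈ [0,+∞] for x,y ∈ ℝ^d. If x, y, x' ∈ ℝ^d satisfy x + y − x' ∈ ∂f(x') (i.e. x' = (Id + ∂f)^{-1}(x+y) is the resolvent of f at x+y), then E(x,y) ≥ |x − x'|². -/
open MeasureTheory Real Set Filter Classical
open scoped ENNReal NNReal Topology

noncomputable section

/-- Legendre transform of an extended-real-valued function on Euclidean space: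
`f*(y) = sup_x (⟪x,y⟫ − f(x))`. -/
def legendre {d : ℕ} (f : EuclideanSpace ℝ (Fin d) → EReal) (y : EuclideanSpace ℝ (Fin d)) :
    EReal :=
  ⨆ w : EuclideanSpace ℝ (Fin d), ((inner ℝ w y : ℝ) : EReal) - f w

/-! Evaluating the subgradient inequality at `z = x` bounds `f x` from below, and the Legendre
supremum at `w = x'` bounds `f* y` from below. The value `f x'` is finite, so it cancels in the
sum, and what remains is `⟪x + y - x', x - x'⟫ + ⟪x', y⟫ - ⟪x, y⟫ = ‖x - x'‖²`. -/

theorem ne_top_of_forall_add_coe_le {α : Type*} {f : α → EReal} {x₀ x' : α} (h₀ : f x₀ ≠ ⊤)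
    (g : α → ℝ) (h : ∀ z, f x' + g z ≤ f z) : f x' ≠ ⊤ := by
  intro htop
  have hx₀ := h x₀
  rw [htop, EReal.top_add_coe] at hx₀
  exact h₀ (top_le_iff.mp hx₀)

theorem inner_sub_le_legendre {d : ℕ} (f : EuclideanSpace ℝ (Fin d) → EReal)
    (w y : EuclideanSpace ℝ (Fin d)) : ((inner ℝ w y : ℝ) : EReal) - f w ≤ legendre f y :=
  le_iSup (fun w => ((inner ℝ w y : ℝ) : EReal) - f w) w

theorem inner_add_sub_add_inner_sub_inner_eq_norm_sq {E : Type*} [NormedAddCommGroup E]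
    [InnerProductSpace ℝ E] (x y x' : E) :
    inner ℝ (x + y - x') (x - x') + inner ℝ x' y - inner ℝ x y = ‖x - x'‖ ^ 2 := by
  rw [show x + y - x' = (x - x') + y by abel, inner_add_left, real_inner_self_eq_norm_sq,
    inner_sub_right, real_inner_comm x y, real_inner_comm x' y]
  ring

theorem quadratic_detachment_resolvent_general {d : ℕ}
    (f : EuclideanSpace ℝ (Fin d) → EReal)
    (hproper : ∃ x, f x ≠ ⊤) (hbot : ∀ x, f x ≠ ⊥)
    (x y x' : EuclideanSpace ℝ (Fin d))
    (hsub : ∀ z : EuclideanSpace ℝ (Fin d),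
      f x' + ((inner ℝ (x + y - x') (z - x') : ℝ) : EReal) ≤ f z) :
    ((‖x - x'‖ ^ 2 : ℝ) : EReal) ≤ f x + legendre f y - ((inner ℝ x y : ℝ) : EReal) := by
  obtain ⟨x₀, hx₀⟩ := hproper
  set r := (f x').toReal
  have hr : f x' = r := (EReal.coe_toReal (ne_top_of_forall_add_coe_le hx₀ _ hsub) (hbot x')).symm
  have hfx : ((r + inner ℝ (x + y - x') (x - x') : ℝ) : EReal) ≤ f x := by
    simpa only [hr, EReal.coe_add] using hsub x
  have hfy : ((inner ℝ x' y - r : ℝ) : EReal) ≤ legendre f y := by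
    simpa only [hr, EReal.coe_sub] using inner_sub_le_legendre f x' y
  calc ((‖x - x'‖ ^ 2 : ℝ) : EReal)
      = ((r + inner ℝ (x + y - x') (x - x') : ℝ) : EReal) + ((inner ℝ x' y - r : ℝ) : EReal)
          - ((inner ℝ x y : ℝ) : EReal) := by
        rw [← inner_add_sub_add_inner_sub_inner_eq_norm_sq x y x']
        norm_cast
        ring
    _ ≤ f x + legendre f y - ((inner ℝ x y : ℝ) : EReal) :=
        EReal.sub_le_sub (add_le_add hfx hfy) le_rfl

/-- **Quadratic detachment via Minty's trick**: for a proper convex lsc `f` with duality gap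
`E(x,y) = f(x) + f*(y) − x·y`, if `x' = (Id + ∂f)⁻¹(x+y)`, i.e. `x + y − x' ∈ ∂f(x')`,
then `E(x,y) ≥ |x − x'|²`. -/
theorem quadratic_detachment_resolvent {d : ℕ}
    (f : EuclideanSpace ℝ (Fin d) → EReal)
    (hproper : ∃ x, f x ≠ ⊤) (hbot : ∀ x, f x ≠ ⊥)
    (hconv : ∀ (x y : EuclideanSpace ℝ (Fin d)) (a b : ℝ), 0 ≤ a → 0 ≤ b → a + b = 1 →
      f (a • x + b • y) ≤ (a : EReal) * f x + (b : EReal) * f y)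
    (hlsc : LowerSemicontinuous f)
    (x y x' : EuclideanSpace ℝ (Fin d))
    (hsub : ∀ z : EuclideanSpace ℝ (Fin d),
      f x' + ((inner ℝ (x + y - x') (z - x') : ℝ) : EReal) ≤ f z) :
    ((‖x - x'‖ ^ 2 : ℝ) : EReal) ≤ f x + legendre f y - ((inner ℝ x y : ℝ) : EReal) :=
  quadratic_detachment_resolvent_general f hproper hbot x y x' hsub
end
end
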